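/- Let α_T be partitioned as [[α_Ts, α_Tg],[1ᵀ−1ᵀα_Ts, 1−1ᵀα_Tg]] consistent with goal/non-goal blocks, and suppose the abstracted chain converges (V_p → 1ᵀ and T_{αs}^k → 0 as k → ∞). Then the limiting true goal-transition probability vector equals 1ᵀ − ‖α⁺_Tg‖·1ᵀ, and hence full convergence of the true system (limit equal to 1ᵀ) holds if and only if ‖α⁺_Tg‖ = 0. -/

import Mathlib

/-!
Because the abstracted goal is absorbing, `P_α^k = [[T_αs^k, 0], [V_k, 1]]`, so the goal row of
`α⁺_T P_α^k α_T` on the non-goal columns is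
`b T_αs^k α_Ts + (1 - ‖α⁺_Tg‖) V_k α_Ts + (1 - ‖α⁺_Tg‖)(1ᵀ - 1ᵀ α_Ts)`, where `b` is the bottom-left
block of `α⁺_T`. Letting `T_αs^k → 0` and `V_k → 1ᵀ` leaves `(1 - ‖α⁺_Tg‖) 1ᵀ`.
-/

open Matrix Finset Filter Topology

section Stmt16

variable {m n : ℕ}

/-- The full abstraction matrix `α_T`, partitioned as
`[[α_Ts, α_Tg],[1ᵀ−1ᵀα_Ts, 1−1ᵀα_Tg]]` (bottom row chosen so that columns
sum to 1). -/
noncomputable def alphaFull (αTs : Matrix (Fin m) (Fin n) ℝ)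
    (αTg : Matrix (Fin m) (Fin 1) ℝ) :
    Matrix (Fin m ⊕ Fin 1) (Fin n ⊕ Fin 1) ℝ :=
  Matrix.fromBlocks αTs αTg
    (Matrix.of fun (_ : Fin 1) (j : Fin n) => 1 - ∑ i, αTs i j)
    (Matrix.of fun (_ : Fin 1) (_ : Fin 1) => 1 - ∑ i, αTg i 0)

/-- The full pseudoinverse matrix `α⁺_T`, partitioned analogously with blocks
`α⁺_Ts` and `α⁺_Tg`. -/
noncomputable def alphaPinvFull (αpTs : Matrix (Fin n) (Fin m) ℝ)
    (αpTg : Matrix (Fin n) (Fin 1) ℝ) :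
    Matrix (Fin n ⊕ Fin 1) (Fin m ⊕ Fin 1) ℝ :=
  Matrix.fromBlocks αpTs αpTg
    (Matrix.of fun (_ : Fin 1) (j : Fin m) => 1 - ∑ i, αpTs i j)
    (Matrix.of fun (_ : Fin 1) (_ : Fin 1) => 1 - ∑ i, αpTg i 0)

/-- The abstracted column-stochastic transition matrix with absorbing
abstracted goal, `P_α = [[T_αs, 0],[t_αg, 1]]`. -/
noncomputable def Palpha (Tαs : Matrix (Fin m) (Fin m) ℝ)
    (tαg : Matrix (Fin 1) (Fin m) ℝ) :
    Matrix (Fin m ⊕ Fin 1) (Fin m ⊕ Fin 1) ℝ :=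
  Matrix.fromBlocks Tαs (0 : Matrix (Fin m) (Fin 1) ℝ) tαg
    (1 : Matrix (Fin 1) (Fin 1) ℝ)

/-- The true goal-transition probability vector at step `k`, i.e. the
goal row of `P_g^k = α⁺_T P_α^k α_T` restricted to non-goal columns. -/
noncomputable def trueGoalVec (αTs : Matrix (Fin m) (Fin n) ℝ)
    (αTg : Matrix (Fin m) (Fin 1) ℝ) (αpTs : Matrix (Fin n) (Fin m) ℝ)
    (αpTg : Matrix (Fin n) (Fin 1) ℝ) (Tαs : Matrix (Fin m) (Fin m) ℝ)
    (tαg : Matrix (Fin 1) (Fin m) ℝ) (k : ℕ) :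
    Matrix (Fin 1) (Fin n) ℝ :=
  Matrix.of fun _ j =>
    (alphaPinvFull αpTs αpTg * (Palpha Tαs tαg) ^ k * alphaFull αTs αTg)
      (Sum.inr 0) (Sum.inl j)

section BlockLowerTriangular

variable {l o R : Type*} [Fintype l] [Fintype o] [DecidableEq l] [DecidableEq o] [Semiring R]

theorem Matrix.exists_fromBlocks_zero₁₂_pow (A : Matrix l l R) (C : Matrix o l R)
    (D : Matrix o o R) (k : ℕ) :
    ∃ C', fromBlocks A 0 C D ^ k = fromBlocks (A ^ k) 0 C' (D ^ k) := by
  induction k with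
  | zero => exact ⟨0, by simp [fromBlocks_one]⟩
  | succ k ih =>
    obtain ⟨C', hC'⟩ := ih
    exact ⟨C' * A + D ^ k * C, by simp [pow_succ, hC', fromBlocks_multiply]⟩

theorem Matrix.fromBlocks_zero₁₂_pow (A : Matrix l l R) (C : Matrix o l R) (D : Matrix o o R)
    (k : ℕ) :
    fromBlocks A 0 C D ^ k =
      fromBlocks (A ^ k) 0 (fromBlocks A 0 C D ^ k).toBlocks₂₁ (D ^ k) := by
  obtain ⟨C', hC'⟩ := exists_fromBlocks_zero₁₂_pow A C D k
  rw [hC', toBlocks_fromBlocks₂₁]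

end BlockLowerTriangular

theorem Matrix.toBlocks₂₁_fromBlocks_mul_fromBlocks_zero₁₂_mul
    {l₁ l₂ o₁ o₂ p₁ p₂ q₁ q₂ R : Type*} [Fintype l₁] [Fintype l₂] [Fintype o₁] [Fintype o₂]
    [NonUnitalNonAssocSemiring R]
    (A : Matrix p₁ l₁ R) (B : Matrix p₁ l₂ R) (C : Matrix p₂ l₁ R) (D : Matrix p₂ l₂ R)
    (T : Matrix l₁ o₁ R) (V : Matrix l₂ o₁ R) (W : Matrix l₂ o₂ R)
    (E : Matrix o₁ q₁ R) (F : Matrix o₁ q₂ R) (G : Matrix o₂ q₁ R) (H : Matrix o₂ q₂ R) :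
    (fromBlocks A B C D * fromBlocks T 0 V W * fromBlocks E F G H).toBlocks₂₁ =
      C * T * E + D * V * E + D * W * G := by
  simp [fromBlocks_multiply, Matrix.add_mul, add_assoc]

theorem Matrix.of_inr_zero_inl_eq_toBlocks₂₁ {l o p α : Type*}
    (M : Matrix (l ⊕ Fin 1) (o ⊕ p) α) :
    (Matrix.of fun (_ : Fin 1) (j : o) => M (Sum.inr 0) (Sum.inl j)) = M.toBlocks₂₁ := by
  ext i j
  rw [Subsingleton.elim i 0]
  rfl

section AbstractedChain

variable (αTs : Matrix (Fin m) (Fin n) ℝ) (αTg : Matrix (Fin m) (Fin 1) ℝ)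
  (αpTs : Matrix (Fin n) (Fin m) ℝ) (αpTg : Matrix (Fin n) (Fin 1) ℝ)
  (Tαs : Matrix (Fin m) (Fin m) ℝ) (tαg : Matrix (Fin 1) (Fin m) ℝ)

theorem Palpha_pow (k : ℕ) :
    Palpha Tαs tαg ^ k = fromBlocks (Tαs ^ k) 0 (Palpha Tαs tαg ^ k).toBlocks₂₁ 1 := by
  simpa only [Palpha, one_pow] using fromBlocks_zero₁₂_pow Tαs tαg 1 k

theorem trueGoalVec_eq_blocks (k : ℕ) :
    trueGoalVec αTs αTg αpTs αpTg Tαs tαg k =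
      (alphaPinvFull αpTs αpTg).toBlocks₂₁ * Tαs ^ k * αTs
        + (alphaPinvFull αpTs αpTg).toBlocks₂₂ * (Palpha Tαs tαg ^ k).toBlocks₂₁ * αTs
        + (alphaPinvFull αpTs αpTg).toBlocks₂₂ * (alphaFull αTs αTg).toBlocks₂₁ := by
  rw [trueGoalVec, of_inr_zero_inl_eq_toBlocks₂₁, Palpha_pow,
    ← fromBlocks_toBlocks (alphaPinvFull αpTs αpTg), ← fromBlocks_toBlocks (alphaFull αTs αTg),
    toBlocks₂₁_fromBlocks_mul_fromBlocks_zero₁₂_mul]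
  simp [alphaFull]

theorem tendsto_trueGoalVec (hTconv : Tendsto (fun k : ℕ => Tαs ^ k) atTop (𝓝 0))
    (hVconv : Tendsto (fun k : ℕ => (Palpha Tαs tαg ^ k).toBlocks₂₁) atTop
      (𝓝 (Matrix.of fun _ _ => 1))) :
    Tendsto (fun k : ℕ => trueGoalVec αTs αTg αpTs αpTg Tαs tαg k) atTop
      (𝓝 (Matrix.of fun _ _ => 1 - ∑ i, αpTg i 0)) := by
  set A := (alphaPinvFull αpTs αpTg).toBlocks₂₁
  set d := (alphaPinvFull αpTs αpTg).toBlocks₂₂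
  set ones : Matrix (Fin 1) (Fin m) ℝ := Matrix.of fun _ _ => 1
  have hlim₁ : Tendsto (fun k : ℕ => A * Tαs ^ k * αTs) atTop (𝓝 0) := by
    simpa [Function.comp_def] using
      (((continuous_const.matrix_mul continuous_id).matrix_mul continuous_const).tendsto 0).comp
        hTconv
  have hlim₂ : Tendsto (fun k : ℕ => d * (Palpha Tαs tαg ^ k).toBlocks₂₁ * αTs) atTop
      (𝓝 (d * ones * αTs)) :=
    (((continuous_const.matrix_mul continuous_id).matrix_mul continuous_const).tendsto _).comp
      hVconv
  -- the columns of `α_T` sum to one: `1ᵀ α_Ts + (1ᵀ - 1ᵀ α_Ts) = 1ᵀ`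
  have hvalue : 0 + d * ones * αTs + d * (alphaFull αTs αTg).toBlocks₂₁ =
      Matrix.of fun _ _ => 1 - ∑ i, αpTg i 0 := by
    ext i j
    simp [d, ones, alphaPinvFull, alphaFull, mul_apply, ← Finset.mul_sum]
    ring
  simp_rw [trueGoalVec_eq_blocks, ← hvalue]
  exact (hlim₁.add hlim₂).add tendsto_const_nhds

end AbstractedChain

theorem stmt16_general
    (αTs : Matrix (Fin m) (Fin n) ℝ) (αTg : Matrix (Fin m) (Fin 1) ℝ)
    (αpTs : Matrix (Fin n) (Fin m) ℝ) (αpTg : Matrix (Fin n) (Fin 1) ℝ)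
    (Tαs : Matrix (Fin m) (Fin m) ℝ) (tαg : Matrix (Fin 1) (Fin m) ℝ)
    -- convergence of the abstracted chain: `T_αs^k → 0` and `V_p → 1ᵀ`
    (hTconv : Tendsto (fun k : ℕ => Tαs ^ k) atTop (𝓝 0))
    (hVconv : Tendsto
      (fun k : ℕ => Matrix.of fun (_ : Fin 1) (j : Fin m) =>
        ((Palpha Tαs tαg) ^ k) (Sum.inr 0) (Sum.inl j))
      atTop (𝓝 (Matrix.of fun (_ : Fin 1) (_ : Fin m) => (1 : ℝ)))) :
    Tendsto (fun k : ℕ => trueGoalVec αTs αTg αpTs αpTg Tαs tαg k) atTop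
        (𝓝 (Matrix.of fun (_ : Fin 1) (_ : Fin n) =>
          (1 : ℝ) - ∑ i, αpTg i 0)) ∧
      (Tendsto (fun k : ℕ => trueGoalVec αTs αTg αpTs αpTg Tαs tαg k) atTop
          (𝓝 (Matrix.of fun (_ : Fin 1) (_ : Fin n) => (1 : ℝ))) ↔
        (∑ i, αpTg i 0) = 0) := by
  have hlim := tendsto_trueGoalVec αTs αTg αpTs αpTg Tαs tαg hTconv
    (by simpa only [of_inr_zero_inl_eq_toBlocks₂₁] using hVconv)
  refine ⟨hlim, fun hfull => ?_, fun hzero => by simpa [hzero] using hlim⟩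
  have hlimits := congrFun₂ (tendsto_nhds_unique (X := Matrix (Fin 1) (Fin n) ℝ) hlim hfull)
  rcases n with _ | n
  · simp
  · simpa using hlimits 0 0

/-- with `P_g^k = α⁺_T P_α^k α_T`, if the abstracted chain
converges (`V_p → 1ᵀ` and `T_αs^k → 0`), then the true goal-transition
probability vector converges to `1ᵀ − ‖α⁺_Tg‖·1ᵀ` (where `‖α⁺_Tg‖ = 1ᵀα⁺_Tg`),
and full convergence of the true system to `1ᵀ` holds iff `‖α⁺_Tg‖ = 0`. -/
theorem stmt16
    (αTs : Matrix (Fin m) (Fin n) ℝ) (αTg : Matrix (Fin m) (Fin 1) ℝ)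
    (αpTs : Matrix (Fin n) (Fin m) ℝ) (αpTg : Matrix (Fin n) (Fin 1) ℝ)
    (Tαs : Matrix (Fin m) (Fin m) ℝ) (tαg : Matrix (Fin 1) (Fin m) ℝ)
    -- `α_T` is column stochastic
    (hαpos : ∀ i j, 0 ≤ (alphaFull αTs αTg) i j)
    -- the pseudoinverse is a left inverse of `α_T`
    (hpinv : alphaPinvFull αpTs αpTg * alphaFull αTs αTg = 1)
    -- `P_α` is column stochastic
    (hPαpos : ∀ i j, 0 ≤ (Palpha Tαs tαg) i j)
    (hPαcol : ∀ j, (∑ i, (Palpha Tαs tαg) i j) = 1)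
    -- convergence of the abstracted chain: `T_αs^k → 0` and `V_p → 1ᵀ`
    (hTconv : Tendsto (fun k : ℕ => Tαs ^ k) atTop (𝓝 0))
    (hVconv : Tendsto
      (fun k : ℕ => Matrix.of fun (_ : Fin 1) (j : Fin m) =>
        ((Palpha Tαs tαg) ^ k) (Sum.inr 0) (Sum.inl j))
      atTop (𝓝 (Matrix.of fun (_ : Fin 1) (_ : Fin m) => (1 : ℝ)))) :
    Tendsto (fun k : ℕ => trueGoalVec αTs αTg αpTs αpTg Tαs tαg k) atTop
        (𝓝 (Matrix.of fun (_ : Fin 1) (_ : Fin n) =>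
          (1 : ℝ) - ∑ i, αpTg i 0)) ∧
      (Tendsto (fun k : ℕ => trueGoalVec αTs αTg αpTs αpTg Tαs tαg k) atTop
          (𝓝 (Matrix.of fun (_ : Fin 1) (_ : Fin n) => (1 : ℝ))) ↔
        (∑ i, αpTg i 0) = 0) :=
  stmt16_general αTs αTg αpTs αpTg Tαs tαg hTconv hVconv

end Stmt16
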